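/- arXiv:2410.16217 — 5 statements merged into one kernel-verified Lean document; each statement's English description precedes it below -/
import Mathlib

section
/- Let n ≥ 1 and let S, T ⊆ {1,…,n} be subsets with |S| + |T| = n. Then for every x ∈ ℂⁿ and every permutation σ of {1,…,n}, one has ∏_{s∈S, t∈T} (x_s − x_{σ(t)}) = (−1)^{|S|·|T|} · ∏_{s∈{1,…,n}∖S, t∈{1,…,n}∖T} (x_s − x_{σ(t)}). (This is the identity f_{S,T} = (−1)^{|S||T|} f_{[n]∖S,[n]∖T} as functions on 𝔥 ×_{𝔥/W} 𝔥, whose ℂ-points are exactly the pairs (x, σ·x).) -/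
/-!
If `S` and `U` meet, both sides vanish: the left one has the factor `x a - x a`, and the
right one too, since `|S| + |U| = n` forces some `b` outside `S ∪ U`. Otherwise `U = Sᶜ`, and
swapping the two products negates each of the `|S|·|Sᶜ|` factors. A permutation `σ` only relabels
`T` as `σ T`, which preserves cardinality and commutes with complements.
-/

open Finset

section

variable {α R : Type*} [DecidableEq α] [CommRing R]

lemma prod_prod_sub_eq_zero_of_mem_inter (x : α → R) {S U : Finset α} {a : α}
    (ha : a ∈ S ∩ U) : ∏ s ∈ S, ∏ u ∈ U, (x s - x u) = 0 :=
  prod_eq_zero (mem_inter.1 ha).1 <| prod_eq_zero (mem_inter.1 ha).2 (sub_self _)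

variable [Fintype α]

lemma prod_prod_sub_compl_comm (x : α → R) (S : Finset α) :
    ∏ s ∈ Sᶜ, ∏ u ∈ S, (x s - x u) =
      (-1 : R) ^ (#S * #Sᶜ) * ∏ s ∈ S, ∏ u ∈ Sᶜ, (x s - x u) := by
  rw [prod_comm, pow_mul', ← prod_const (s := S), ← prod_mul_distrib]
  refine prod_congr rfl fun s _ => ?_
  rw [← prod_neg]
  exact prod_congr rfl fun u _ => (neg_sub _ _).symm

lemma prod_prod_sub_eq_neg_one_pow_mul_compl (x : α → R) {S U : Finset α}
    (h : #S + #U = Fintype.card α) :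
    ∏ s ∈ S, ∏ u ∈ U, (x s - x u) =
      (-1 : R) ^ (#S * #U) * ∏ s ∈ Sᶜ, ∏ u ∈ Uᶜ, (x s - x u) := by
  by_cases hSU : (S ∩ U).Nonempty
  · obtain ⟨a, ha⟩ := hSU
    obtain ⟨b, hb⟩ : ((S ∪ U)ᶜ).Nonempty := by
      have := card_union_add_card_inter S U
      have := card_pos.2 ⟨a, ha⟩
      rw [← card_pos, card_compl]
      omega
    rw [compl_union] at hb
    rw [prod_prod_sub_eq_zero_of_mem_inter x ha, prod_prod_sub_eq_zero_of_mem_inter x hb,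
      mul_zero]
  · have hU : U = Sᶜ := by
      refine eq_of_subset_of_card_le (fun u hu => mem_compl.2 fun hs => hSU ⟨u, ?_⟩) ?_
      · exact mem_inter.2 ⟨hs, hu⟩
      · rw [card_compl]
        omega
    rw [hU, compl_compl, prod_prod_sub_compl_comm, ← mul_assoc, ← pow_add, ← two_mul,
      pow_mul, neg_one_sq, one_pow, one_mul]

lemma map_compl_perm (σ : Equiv.Perm α) (T : Finset α) :
    Tᶜ.map σ.toEmbedding = (T.map σ.toEmbedding)ᶜ := by
  ext
  simp

end

theorem stmt0_general (n : ℕ) (S T : Finset (Fin n)) (hST : S.card + T.card = n)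
    (x : Fin n → ℂ) (σ : Equiv.Perm (Fin n)) :
    ∏ s ∈ S, ∏ t ∈ T, (x s - x (σ t)) =
      (-1 : ℂ) ^ (S.card * T.card) * ∏ s ∈ Sᶜ, ∏ t ∈ Tᶜ, (x s - x (σ t)) := by
  have hσ : ∀ (A : Finset (Fin n)) (s : Fin n),
      ∏ t ∈ A, (x s - x (σ t)) = ∏ u ∈ A.map σ.toEmbedding, (x s - x u) := fun A s => by
    rw [prod_map]
    rfl
  simp only [hσ, map_compl_perm]
  rw [← card_map (s := T) σ.toEmbedding] at hST ⊢
  exact prod_prod_sub_eq_neg_one_pow_mul_compl x (hST.trans (Fintype.card_fin n).symm)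

/-- For subsets `S, T ⊆ {1,…,n}` with `|S| + |T| = n`, every `x ∈ ℂⁿ`
and every permutation `σ`, one has
`∏_{s∈S, t∈T} (x_s − x_{σ t}) = (−1)^{|S|·|T|} ∏_{s∉S, t∉T} (x_s − x_{σ t})`,
i.e. `f_{S,T} = (−1)^{|S||T|} f_{[n]∖S,[n]∖T}` on the ℂ-points `(x, σ·x)` of `𝔥 ×_{𝔥/W} 𝔥`. -/
theorem stmt0 (n : ℕ) (hn : 1 ≤ n) (S T : Finset (Fin n)) (hST : S.card + T.card = n)
    (x : Fin n → ℂ) (σ : Equiv.Perm (Fin n)) :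
    ∏ s ∈ S, ∏ t ∈ T, (x s - x (σ t)) =
      (-1 : ℂ) ^ (S.card * T.card) * ∏ s ∈ Sᶜ, ∏ t ∈ Tᶜ, (x s - x (σ t)) :=
  stmt0_general n S T hST x σ
end

section
/- Fix n ≥ 2. For y ∈ ℂⁿ with pairwise distinct coordinates and 1 ≤ k ≤ n−1, let s_k(y) be the n×n complex matrix equal to the identity except that its 2×2 submatrix in rows and columns {k, k+1} is [[0, 1/(y_k − y_{k+1})], [y_{k+1} − y_k, 0]]. On pairs (g, y) with g an n×n complex matrix and y ∈ ℂⁿ having pairwise distinct coordinates, define σ_k(g, y) := (g · s_k(y), τ_k·y), where τ_k·y swaps the k-th and (k+1)-st coordinates of y. Define composites recursively by Σ^{(1)} := id and Σ^{(m)} := σ_1 ∘ σ_2 ∘ ⋯ ∘ σ_{m−1} ∘ Σ^{(m−1)} for 2 ≤ m ≤ n. Then for every such pair (g, y), Σ^{(n)}(g, y) = (g', w_0·y), where w_0·y = (y_n, y_{n−1}, …, y_1) reverses the coordinates and g' is the matrix with entries g'_{i,j} = g_{i, n+1−j} · ∏_{ℓ>j}(y_{n+1−j} − y_{n+1−ℓ})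 / ∏_{ℓ<j}(y_{n+1−j} − y_{n+1−ℓ}). -/
open Finset

/-- The matrix `s_k(y)` (entries indexed by `1,…,n`): the identity matrix except that its
2×2 submatrix in rows/columns `{k, k+1}` is `[[0, 1/(y_k−y_{k+1})],[y_{k+1}−y_k, 0]]`. -/
noncomputable def ggS (y : ℕ → ℂ) (k : ℕ) : ℕ → ℕ → ℂ := fun l j =>
  if l = k ∧ j = k + 1 then 1 / (y k - y (k+1))
  else if l = k + 1 ∧ j = k then y (k+1) - y k
  else if l = j ∧ l ≠ k ∧ l ≠ k + 1 then 1 else 0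

/-- The Gelfand–Graev map `σ_k (g, y) = (g · s_k(y), τ_k · y)`, where matrices are
`(ℕ→ℕ→ℂ)`-valued with rows/columns `1,…,n` and `τ_k` swaps coordinates `k` and `k+1`. -/
noncomputable def ggSigma (n k : ℕ) :
    ((ℕ → ℕ → ℂ) × (ℕ → ℂ)) → ((ℕ → ℕ → ℂ) × (ℕ → ℂ)) := fun p =>
  (fun i j => ∑ l ∈ Icc 1 n, p.1 i l * ggS p.2 k l j,
   fun i => p.2 (if i = k then k + 1 else if i = k + 1 then k else i))

/-- The composite `σ_1 ∘ σ_2 ∘ ⋯ ∘ σ_m`. -/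
noncomputable def ggChain (n : ℕ) : ℕ → ((ℕ → ℕ → ℂ) × (ℕ → ℂ)) → ((ℕ → ℕ → ℂ) × (ℕ → ℂ))
  | 0 => id
  | m + 1 => (ggChain n m) ∘ (ggSigma n (m + 1))

/-- The recursively defined composites `Σ^{(1)} = id`,
`Σ^{(m)} = σ_1 ∘ σ_2 ∘ ⋯ ∘ σ_{m−1} ∘ Σ^{(m−1)}`. -/
noncomputable def ggBig (n : ℕ) : ℕ → ((ℕ → ℕ → ℂ) × (ℕ → ℂ)) → ((ℕ → ℕ → ℂ) × (ℕ → ℂ))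
  | 0 => id
  | m + 1 => (ggChain n m) ∘ (ggBig n m)

/-!
Each `σ_k` maps a column-rescaled state (column `j` equal to `c j` times column `π j` of `g`,
coordinates `y ∘ π`) to a state of the same shape: `π` becomes `π ∘ τ_k`, and columns `k`, `k + 1`
are rescaled by the two off-diagonal entries of `s_k`. In `Σ^{(m+1)} = σ_1 ∘ ⋯ ∘ σ_m ∘ Σ^{(m)}`
the maps `σ_m, …, σ_1` carry column `m + 1` of `g` (together with `y_{m+1}`) to the front; it
picks up a factor `y_{m+1} − y_a` from every column `a` it passes, and that column is divided by
`y_a − y_{m+1}`. Hence after `Σ^{(m)}` column `a ≤ m` of `g` sits at position `m + 1 − a` with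
factor `∏_{l<a} (y_a − y_l) / ∏_{a<l≤m} (y_a − y_l)`, which is the stated formula at `m = n`.
-/

local notation "GGState" => (ℕ → ℕ → ℂ) × (ℕ → ℂ)

theorem ggS_eq_zero_of_ne_swap {y : ℕ → ℂ} {k l j : ℕ} (h : l ≠ Equiv.swap k (k + 1) j) :
    ggS y k l j = 0 := by
  rw [Equiv.swap_apply_def] at h
  unfold ggS
  split_ifs at h ⊢ <;> grind

theorem ggS_succ_self (y : ℕ → ℂ) (k : ℕ) : ggS y k (k + 1) k = y (k + 1) - y k := by
  simp [ggS]

theorem ggS_self_succ (y : ℕ → ℂ) (k : ℕ) : ggS y k k (k + 1) = 1 / (y k - y (k + 1)) := by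
  simp [ggS]

theorem ggS_self {y : ℕ → ℂ} {k j : ℕ} (hk : j ≠ k) (hk1 : j ≠ k + 1) : ggS y k j j = 1 := by
  simp [ggS, hk, hk1]

theorem ggSigma_snd (n k : ℕ) (p : GGState) :
    (ggSigma n k p).2 = p.2 ∘ Equiv.swap k (k + 1) := by
  ext i
  simp only [ggSigma, Function.comp_apply, Equiv.swap_apply_def]

theorem ggSigma_fst_apply {n k : ℕ} (hk : 1 ≤ k) (hkn : k + 1 ≤ n)
    (p : GGState) (i : ℕ) {j : ℕ} (hj : j ∈ Icc 1 n) :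
    (ggSigma n k p).1 i j =
      p.1 i (Equiv.swap k (k + 1) j) * ggS p.2 k (Equiv.swap k (k + 1) j) j := by
  show ∑ l ∈ Icc 1 n, p.1 i l * ggS p.2 k l j = _
  refine sum_eq_single_of_mem _ ?_
    fun l _ hl => by rw [ggS_eq_zero_of_ne_swap hl, mul_zero]
  rw [mem_Icc] at hj ⊢
  rw [Equiv.swap_apply_def]
  split_ifs <;> omega

-- `σ_k` reads and writes only columns and coordinates `1, …, n` (other columns become `0`).
def WindowEq (n : ℕ) (p q : GGState) : Prop :=
  Set.EqOn p.2 q.2 (Icc 1 n) ∧ ∀ i, Set.EqOn (p.1 i) (q.1 i) (Icc 1 n)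

namespace WindowEq

variable {n : ℕ} {p q r : GGState}

theorem refl (n : ℕ) (p : GGState) : WindowEq n p p :=
  ⟨Set.eqOn_refl _ _, fun _ => Set.eqOn_refl _ _⟩

theorem trans (h₁ : WindowEq n p q) (h₂ : WindowEq n q r) : WindowEq n p r :=
  ⟨h₁.1.trans h₂.1, fun i => (h₁.2 i).trans (h₂.2 i)⟩

end WindowEq

theorem ggSigma_congr {n k : ℕ} {p q : GGState} (hk : 1 ≤ k) (hkn : k + 1 ≤ n)
    (h : WindowEq n p q) :
    WindowEq n (ggSigma n k p) (ggSigma n k q) := by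
  have hk' : k ∈ Icc 1 n := mem_Icc.2 ⟨hk, by omega⟩
  have hk1 : k + 1 ∈ Icc 1 n := mem_Icc.2 ⟨by omega, hkn⟩
  refine ⟨fun i hi => h.1 ?_, fun i j _ => ?_⟩
  · simp only [mem_coe, mem_Icc] at hi ⊢
    split_ifs <;> omega
  · show ∑ l ∈ Icc 1 n, p.1 i l * ggS p.2 k l j = ∑ l ∈ Icc 1 n, q.1 i l * ggS q.2 k l j
    refine sum_congr rfl fun l hl => ?_
    simp only [ggS, h.2 i hl, h.1 hk', h.1 hk1]

theorem ggChain_congr {n k : ℕ} {p q : GGState} (hkn : k + 1 ≤ n)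
    (h : WindowEq n p q) :
    WindowEq n (ggChain n k p) (ggChain n k q) := by
  induction k generalizing p q with
  | zero => exact h
  | succ k ih => exact ih (by omega) (ggSigma_congr (by omega) hkn h)

def colScaled (g : ℕ → ℕ → ℂ) (y : ℕ → ℂ) (π : ℕ → ℕ) (c : ℕ → ℂ) :
    GGState :=
  (fun i j => g i (π j) * c j, y ∘ π)

section colScaled

variable {n : ℕ} {g : ℕ → ℕ → ℂ} {y : ℕ → ℂ} {π π' : ℕ → ℕ} {c c' : ℕ → ℂ}

theorem colScaled_congr (hπ : Set.EqOn π π' (Icc 1 n)) (hc : Set.EqOn c c' (Icc 1 n)) :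
    WindowEq n (colScaled g y π c) (colScaled g y π' c') :=
  ⟨fun _ hj => congrArg y (hπ hj), fun i _ hj => by simp only [colScaled, hπ hj, hc hj]⟩

theorem ggSigma_colScaled {k : ℕ} (hk : 1 ≤ k) (hkn : k + 1 ≤ n)
    (hπ : Set.EqOn (π ∘ Equiv.swap k (k + 1)) π' (Icc 1 n))
    (hc : Set.EqOn (fun j => c (Equiv.swap k (k + 1) j) *
      ggS (y ∘ π) k (Equiv.swap k (k + 1) j) j) c' (Icc 1 n)) :
    WindowEq n (ggSigma n k (colScaled g y π c)) (colScaled g y π' c') := by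
  refine ⟨fun j hj => ?_, fun i j hj => ?_⟩
  · rw [ggSigma_snd]
    exact congrArg y (hπ hj)
  · rw [ggSigma_fst_apply hk hkn _ _ hj]
    simp only [colScaled, ← hπ hj, ← hc hj, Function.comp_apply, mul_assoc]

end colScaled

noncomputable def colCoeff (y : ℕ → ℂ) (m a : ℕ) : ℂ :=
  (∏ l ∈ Ico 1 a, (y a - y l)) / ∏ l ∈ Ioc a m, (y a - y l)

theorem colCoeff_succ (y : ℕ → ℂ) {m a : ℕ} (h : a ≤ m) :
    colCoeff y (m + 1) a = colCoeff y m a / (y a - y (m + 1)) := by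
  rw [colCoeff, colCoeff, prod_Ioc_succ_top h, div_div]

theorem colCoeff_self (y : ℕ → ℂ) (m : ℕ) : colCoeff y m m = ∏ l ∈ Ico 1 m, (y m - y l) := by
  rw [colCoeff, Ioc_self, prod_empty, div_one]

theorem colCoeff_eq_prod_reflect (y : ℕ → ℂ) {n j : ℕ} (hj : j ∈ Icc 1 n) :
    colCoeff y n (n + 1 - j) =
      (∏ l ∈ Icc (j + 1) n, (y (n + 1 - j) - y (n + 1 - l))) /
        ∏ l ∈ Icc 1 (j - 1), (y (n + 1 - j) - y (n + 1 - l)) := by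
  rw [mem_Icc] at hj
  set f : ℕ → ℂ := fun l => y (n + 1 - j) - y l
  rw [← Ico_add_one_right_eq_Icc, ← Ico_add_one_right_eq_Icc, Nat.sub_add_cancel hj.1,
    prod_Ico_reflect f (j + 1) (n := n + 1) (by omega),
    prod_Ico_reflect f 1 (n := n + 1) (by omega),
    colCoeff, ← Ico_add_one_add_one_eq_Ioc]
  congr 2 <;> congr 1 <;> omega

def revPerm (m j : ℕ) : ℕ := if j ≤ m then m + 1 - j else j

def bubblePerm (m k j : ℕ) : ℕ :=
  if j ≤ k then m + 1 - j else if j = k + 1 then m + 1 else if j ≤ m + 1 then m + 2 - j else j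

noncomputable def bubbleCoeff (y : ℕ → ℂ) (m k j : ℕ) : ℂ :=
  if j ≤ k then colCoeff y m (m + 1 - j)
  else if j = k + 1 then ∏ l ∈ Ico 1 (m + 1 - k), (y (m + 1) - y l)
  else if j ≤ m + 1 then colCoeff y (m + 1) (m + 2 - j)
  else 1

noncomputable def reversedState (g : ℕ → ℕ → ℂ) (y : ℕ → ℂ) (m : ℕ) : GGState :=
  colScaled g y (revPerm m) fun j => if j ≤ m then colCoeff y m (m + 1 - j) else 1

-- `reversedState g y m` after `σ_m, …, σ_{k+1}`: column `m + 1` of `g` is now at position `k + 1`.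
noncomputable def bubbleState (g : ℕ → ℕ → ℂ) (y : ℕ → ℂ) (m k : ℕ) : GGState :=
  colScaled g y (bubblePerm m k) (bubbleCoeff y m k)

section states

variable {n : ℕ} (g : ℕ → ℕ → ℂ) (y : ℕ → ℂ)

theorem reversedState_eq_bubbleState (m : ℕ) : reversedState g y m = bubbleState g y m m := by
  have hπ : revPerm m = bubblePerm m m := by
    ext j
    simp only [revPerm, bubblePerm]
    split_ifs <;> omega
  have hc : (fun j => if j ≤ m then colCoeff y m (m + 1 - j) else 1) = bubbleCoeff y m m := by
    ext j
    simp only [bubbleCoeff]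
    split_ifs <;> first | rfl | omega | simp [show m + 1 - m = 1 by omega]
  rw [reversedState, bubbleState, hπ, hc]

theorem bubbleState_zero_windowEq (m : ℕ) :
    WindowEq n (bubbleState g y m 0) (reversedState g y (m + 1)) := by
  refine colScaled_congr (fun j hj => ?_) (fun j hj => ?_) <;>
    simp only [mem_coe, mem_Icc] at hj
  · simp only [bubblePerm, revPerm]
    split_ifs <;> omega
  · rcases (by omega : j = 1 ∨ 1 < j) with rfl | hj₁
    · simp [bubbleCoeff, colCoeff_self]
    · simp only [bubbleCoeff]
      split_ifs <;> first | rfl | omega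

theorem ggSigma_bubbleState {m k : ℕ} (hk : 1 ≤ k) (hkm : k ≤ m) (hmn : m + 1 ≤ n) :
    WindowEq n (ggSigma n k (bubbleState g y m k)) (bubbleState g y m (k - 1)) := by
  refine ggSigma_colScaled hk (by omega) (fun j hj => ?_) (fun j hj => ?_)
  · simp only [Function.comp_apply, Equiv.swap_apply_def, bubblePerm]
    split_ifs <;> omega
  · simp only [mem_coe, mem_Icc] at hj
    rcases (by omega : j = k ∨ j = k + 1 ∨ (j ≠ k ∧ j ≠ k + 1)) with rfl | rfl | ⟨hjk, hjk₁⟩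
    · have hprod := prod_Ico_succ_top (by omega : 1 ≤ m + 1 - j) fun l => y (m + 1) - y l
      rw [show m + 1 - j + 1 = m + 1 - (j - 1) by omega] at hprod
      simp only [Equiv.swap_apply_left, ggS_succ_self, Function.comp_apply, bubbleCoeff,
        bubblePerm, hprod]
      split_ifs <;> first | omega | rfl
    · simp only [Equiv.swap_apply_right, ggS_self_succ, Function.comp_apply, bubbleCoeff,
        bubblePerm]
      split_ifs <;> try omega
      rw [show m + 2 - (k + 1) = m + 1 - k by omega, colCoeff_succ y (by omega), mul_one_div]
    · simp only [Equiv.swap_apply_of_ne_of_ne hjk hjk₁, ggS_self hjk hjk₁, mul_one, bubbleCoeff]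
      split_ifs <;> first | omega | rfl

theorem ggChain_bubbleState {m k : ℕ} (hkm : k ≤ m) (hmn : m + 1 ≤ n) :
    WindowEq n (ggChain n k (bubbleState g y m k)) (bubbleState g y m 0) := by
  induction k with
  | zero => exact WindowEq.refl n _
  | succ k ih =>
    exact (ggChain_congr (by omega) (ggSigma_bubbleState g y (by omega) hkm hmn)).trans
      (ih (by omega))

theorem ggBig_windowEq_reversedState {m : ℕ} (hmn : m ≤ n) :
    WindowEq n (ggBig n m (g, y)) (reversedState g y m) := by
  induction m with
  | zero =>
    refine ⟨fun j hj => ?_, fun i j hj => ?_⟩ <;> simp only [mem_coe, mem_Icc] at hj <;>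
      simp [ggBig, reversedState, colScaled, revPerm, show j ≠ 0 by omega]
  | succ m ih =>
    exact (ggChain_congr hmn (ih (by omega))).trans <| by
      rw [reversedState_eq_bubbleState]
      exact (ggChain_bubbleState g y le_rfl hmn).trans (bubbleState_zero_windowEq g y m)

end states

theorem stmt2_general (n : ℕ) (g : ℕ → ℕ → ℂ) (y : ℕ → ℂ) :
    (∀ i ∈ Icc 1 n, (ggBig n n (g, y)).2 i = y (n + 1 - i)) ∧
    (∀ i ∈ Icc 1 n, ∀ j ∈ Icc 1 n,
      (ggBig n n (g, y)).1 i j =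
        g i (n + 1 - j) * (∏ l ∈ Icc (j+1) n, (y (n+1-j) - y (n+1-l))) /
          ∏ l ∈ Icc 1 (j-1), (y (n+1-j) - y (n+1-l))) := by
  obtain ⟨hy, hg⟩ := ggBig_windowEq_reversedState g y (le_refl n)
  refine ⟨fun i hi => ?_, fun i _ j hj => ?_⟩
  · rw [hy hi]
    simp [reversedState, colScaled, revPerm, (mem_Icc.1 hi).2]
  · rw [hg i hj, mul_div_assoc, ← colCoeff_eq_prod_reflect y hj]
    simp [reversedState, colScaled, revPerm, (mem_Icc.1 hj).2]

/-- For every `n×n` complex matrix `g` and every `y ∈ ℂⁿ` with pairwise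
distinct coordinates, `Σ^{(n)}(g, y) = (g', w_0·y)` where `(w_0·y)_i = y_{n+1−i}` and
`g'_{i,j} = g_{i,n+1−j} · ∏_{ℓ>j}(y_{n+1−j} − y_{n+1−ℓ}) / ∏_{ℓ<j}(y_{n+1−j} − y_{n+1−ℓ})`. -/
theorem stmt2 (n : ℕ) (hn : 2 ≤ n) (g : ℕ → ℕ → ℂ) (y : ℕ → ℂ)
    (hy : ∀ k ∈ Icc 1 n, ∀ l ∈ Icc 1 n, k ≠ l → y k ≠ y l) :
    (∀ i ∈ Icc 1 n, (ggBig n n (g, y)).2 i = y (n + 1 - i)) ∧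
    (∀ i ∈ Icc 1 n, ∀ j ∈ Icc 1 n,
      (ggBig n n (g, y)).1 i j =
        g i (n + 1 - j) * (∏ l ∈ Icc (j+1) n, (y (n+1-j) - y (n+1-l))) /
          ∏ l ∈ Icc 1 (j-1), (y (n+1-j) - y (n+1-l))) :=
  stmt2_general n g y
end

section
/- Let n ≥ 3. Consider ℂ-linear maps x_i : ℂ^i → ℂ^{i+1} and y_i : ℂ^{i+1} → ℂ^i for 1 ≤ i ≤ n−2, linear functionals α_i : ℂ^{n−1} → ℂ for 1 ≤ i ≤ n, and linear maps β_i : ℂ → ℂ^{n−1} for 1 ≤ i ≤ n. Set φ : ℂ^{n−1} → ℂⁿ, φ(v) := (α_1(v),…,α_n(v)), and ψ : ℂⁿ → ℂ^{n−1}, ψ(v_1,…,v_n) := β_1(v_1)+⋯+β_n(v_n). Assume the central moment-map relations hold for some ν_1,…,ν_{n−1} ∈ ℂ: y_1∘x_1 = ν_1·id_ℂ; y_i∘x_i = x_{i−1}∘y_{i−1} + ν_i·id_{ℂ^i} for 2 ≤ i ≤ n−2; and ψ∘φ = x_{n−2}∘y_{n−2} + ν_{n−1}·id_{ℂ^{n−1}}.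 Then the following are equivalent. (1) Whenever V_1 ⊆ ℂ^1, …, V_{n−1} ⊆ ℂ^{n−1} and L_1, …, L_{n−1} ⊆ ℂ are linear subspaces satisfying x_i(V_i) ⊆ V_{i+1} and y_i(V_{i+1}) ⊆ V_i for 1 ≤ i ≤ n−2, α_j(V_{n−1}) ⊆ L_j and β_j(L_j) ⊆ V_{n−1} for 1 ≤ j ≤ n−1, and V_{n−1} ⊆ ker α_n, then all V_i and all L_j are zero. (2) Each x_i is injective, φ is injective, and for every nonempty S ⊆ {1,…,n−1}, the map φ∘ψ : ℂⁿ → ℂⁿ does not map the coordinate subspace ℂ^S into itself. -/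
/-!
(1) ⇒ (2): a subspace `W ⊆ ℂ^{t+1}` with `x_t y_t W ⊆ W` generates the graded subspace
`V_j = y_j ⋯ y_t W` (zero above `t + 1`), which is `x`-stable as well, because the moment-map
relations rewrite `x_i y_i` as `y_{i+1} x_{i+1} - ν_{i+1}`. For `W = ker x_{t+1}`, `W = ker φ`,
and `W = ψ(ℂ^S)` together with `L_j = ℂ` for `j ∈ S`, condition (1) forces `W = 0`.

(2) ⇒ (1): each `L_j` is `0` or `ℂ`, and for `S = {j | L_j = ℂ}` we get
`φψ(ℂ^S) ⊆ φ(V_{n-1}) ⊆ ℂ^S`, so `S = ∅`. Then `φ(V_{n-1}) = 0`, so `V_{n-1} = 0`, and the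
injective `x_i` propagate this downwards.
-/

/-- The coordinate subspace `ℂ^S ⊆ ℂⁿ`: the span of the standard basis vectors `e_i`, `i ∈ S`. -/
noncomputable def coordSubspace (n : ℕ) (S : Finset (Fin n)) : Submodule ℂ (Fin n → ℂ) :=
  Submodule.span ℂ ((fun i => Pi.single i (1 : ℂ)) '' ↑S)

theorem mem_coordSubspace_iff {n : ℕ} {S : Finset (Fin n)} {v : Fin n → ℂ} :
    v ∈ coordSubspace n S ↔ ∀ i ∉ S, v i = 0 := by
  have := (Pi.basisFun ℂ (Fin n)).mem_span_image (m := v) (s := ↑S)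
  simp only [Pi.basisFun_apply] at this
  rw [coordSubspace, this]
  simp [Set.subset_def, not_imp_comm]

section yFamily

variable {K : Type*} [CommRing K] (y : ∀ i : ℕ, (Fin (i+1) → K) →ₗ[K] (Fin i → K)) (t : ℕ)
  (W : Submodule K (Fin (t+1) → K))

/-- `yFamily y t W j = y_j (y_{j+1} (⋯ (y_t W)))` for `j ≤ t + 1`, and `0` for `j > t + 1`. -/
noncomputable def yFamily (j : ℕ) : Submodule K (Fin j → K) :=
  if _ : j < t + 1 then (yFamily (j+1)).map (y j)
  else if h : j = t + 1 then cast (by rw [h]) W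
  else ⊥
termination_by t + 1 - j

theorem yFamily_of_lt {j : ℕ} (h : j < t + 1) :
    yFamily y t W j = (yFamily y t W (j+1)).map (y j) := by
  rw [yFamily]
  simp [h]

@[simp]
theorem yFamily_self : yFamily y t W (t+1) = W := by
  rw [yFamily]
  simp

theorem yFamily_of_gt {j : ℕ} (h : t + 1 < j) : yFamily y t W j = ⊥ := by
  rw [yFamily]
  simp [Nat.lt_asymm h, Nat.ne_of_gt h]

theorem map_yFamily_le (j : ℕ) : (yFamily y t W (j+1)).map (y j) ≤ yFamily y t W j := by
  by_cases h : j < t + 1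
  · rw [yFamily_of_lt y t W h]
  · simp [yFamily_of_gt y t W (j := j + 1) (by omega)]

variable (x : ∀ i : ℕ, (Fin i → K) →ₗ[K] (Fin (i+1) → K)) (ν : ℕ → K)

theorem map_x_yFamily_le
    (hmid : ∀ i, 1 ≤ i → i < t → ∀ u : Fin (i+1) → K,
      x i (y i u) = y (i+1) (x (i+1) u) - ν (i+1) • u)
    (htop : 1 ≤ t → ∀ u ∈ W, x t (y t u) ∈ W) {i : ℕ} (hi : 1 ≤ i) (hit : i ≤ t) :
    (yFamily y t W i).map (x i) ≤ yFamily y t W (i+1) := by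
  induction hit using Nat.decreasingInduction with
  | self =>
    rw [yFamily_of_lt y t W (by omega), yFamily_self]
    rintro _ ⟨_, ⟨u, hu, rfl⟩, rfl⟩
    exact htop hi u hu
  | of_succ i hit ih =>
    rw [yFamily_of_lt y t W (by omega)]
    rintro _ ⟨_, ⟨u, hu, rfl⟩, rfl⟩
    rw [hmid i hi hit u]
    refine sub_mem (map_yFamily_le y t W (i+1) ⟨_, ih (by omega) ⟨u, hu, rfl⟩, rfl⟩) ?_
    exact Submodule.smul_mem _ _ hu

theorem map_x_yFamily_le_of_le_ker
    (hmid : ∀ i, 1 ≤ i → i ≤ t → ∀ u : Fin (i+1) → K,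
      x i (y i u) = y (i+1) (x (i+1) u) - ν (i+1) • u)
    (hker : W ≤ LinearMap.ker (x (t+1))) {i : ℕ} (hi : 1 ≤ i) :
    (yFamily y t W i).map (x i) ≤ yFamily y t W (i+1) := by
  rcases lt_trichotomy i (t+1) with hit | rfl | hit
  · refine map_x_yFamily_le y t W x ν (fun i hi hit ↦ hmid i hi hit.le) ?_ hi (by omega)
    intro ht u hu
    rw [hmid t ht le_rfl u, hker hu, map_zero, zero_sub]
    exact neg_mem (Submodule.smul_mem _ _ hu)
  · rwa [yFamily_self, Submodule.map_le_iff_le_comap, yFamily_of_gt y t W (by omega),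
      Submodule.comap_bot]
  · simp [yFamily_of_gt y t W hit]

end yFamily

theorem map_pi_comp_lsum_coordSubspace_le {E : Type*} [AddCommGroup E] [Module ℂ E] {n : ℕ}
    {α : Fin (n+1) → (E →ₗ[ℂ] ℂ)} {β : Fin (n+1) → (ℂ →ₗ[ℂ] E)} {V : Submodule ℂ E}
    {L : Fin n → Submodule ℂ ℂ} (hα : ∀ j : Fin n, V.map (α j.castSucc) ≤ L j)
    (hβ : ∀ j : Fin n, (L j).map (β j.castSucc) ≤ V) (hker : V ≤ LinearMap.ker (α (Fin.last n)))
    {S : Finset (Fin n)} (hS : ∀ j, j ∈ S ↔ L j ≠ ⊥) :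
    (coordSubspace (n+1) (S.image Fin.castSucc)).map
        ((LinearMap.pi α).comp (LinearMap.lsum ℂ (fun _ ↦ ℂ) ℂ β)) ≤
      coordSubspace (n+1) (S.image Fin.castSucc) := by
  have hψ : (coordSubspace (n+1) (S.image Fin.castSucc)).map
      (LinearMap.lsum ℂ (fun _ ↦ ℂ) ℂ β) ≤ V := by
    rw [coordSubspace, Submodule.map_span, Submodule.span_le]
    rintro _ ⟨_, ⟨_, hi, rfl⟩, rfl⟩
    obtain ⟨j, hj, rfl⟩ := Finset.mem_image.mp hi
    have hLj : L j = ⊤ := (eq_bot_or_eq_top (L j)).resolve_left ((hS j).mp hj)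
    rw [LinearMap.lsum_piSingle]
    exact hβ j ⟨1, by simp [hLj], rfl⟩
  have hφ : V.map (LinearMap.pi α) ≤ coordSubspace (n+1) (S.image Fin.castSucc) := by
    rintro _ ⟨v, hv, rfl⟩
    rw [mem_coordSubspace_iff]
    intro i hi
    induction i using Fin.lastCases with
    | last => exact hker hv
    | cast j =>
      have hLj : L j = ⊥ := not_not.mp fun hj ↦ hi (Finset.mem_image_of_mem _ ((hS j).mpr hj))
      simpa [hLj] using hα j ⟨v, hv, rfl⟩
  rw [Submodule.map_comp]
  exact (Submodule.map_mono hψ).trans hφ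

-- Condition (1) of the theorem, i.e. King `θ`-stability for `θ = (1, …, 1)`.
def HasNoInvariantSubspace (m : ℕ) (x : ∀ i : ℕ, (Fin i → ℂ) →ₗ[ℂ] (Fin (i+1) → ℂ))
    (y : ∀ i : ℕ, (Fin (i+1) → ℂ) →ₗ[ℂ] (Fin i → ℂ))
    (α : Fin (m+3) → ((Fin (m+2) → ℂ) →ₗ[ℂ] ℂ))
    (β : Fin (m+3) → (ℂ →ₗ[ℂ] (Fin (m+2) → ℂ))) : Prop :=
  ∀ (V : ∀ i : ℕ, Submodule ℂ (Fin i → ℂ)) (L : Fin (m+2) → Submodule ℂ ℂ),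
    (∀ i, 1 ≤ i → i ≤ m+1 → (V i).map (x i) ≤ V (i+1)) →
    (∀ i, 1 ≤ i → i ≤ m+1 → (V (i+1)).map (y i) ≤ V i) →
    (∀ j : Fin (m+2), (V (m+2)).map (α j.castSucc) ≤ L j) →
    (∀ j : Fin (m+2), (L j).map (β j.castSucc) ≤ V (m+2)) →
    V (m+2) ≤ LinearMap.ker (α (Fin.last (m+2))) →
    ((∀ i, 1 ≤ i → i ≤ m+2 → V i = ⊥) ∧ ∀ j : Fin (m+2), L j = ⊥)

namespace HasNoInvariantSubspace

variable {m : ℕ} {x : ∀ i : ℕ, (Fin i → ℂ) →ₗ[ℂ] (Fin (i+1) → ℂ)}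
  {y : ∀ i : ℕ, (Fin (i+1) → ℂ) →ₗ[ℂ] (Fin i → ℂ)} {α : Fin (m+3) → ((Fin (m+2) → ℂ) →ₗ[ℂ] ℂ)}
  {β : Fin (m+3) → (ℂ →ₗ[ℂ] (Fin (m+2) → ℂ))} {ν : ℕ → ℂ}

theorem injective_x (h : HasNoInvariantSubspace m x y α β)
    (hmid : ∀ i, 1 ≤ i → i ≤ m → ∀ u : Fin (i+1) → ℂ,
      x i (y i u) = y (i+1) (x (i+1) u) - ν (i+1) • u)
    {i : ℕ} (hi : 1 ≤ i) (him : i ≤ m + 1) : Function.Injective (x i) := by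
  obtain ⟨t, rfl⟩ : ∃ t, i = t + 1 := ⟨i - 1, by omega⟩
  have hV := h (yFamily y t (LinearMap.ker (x (t+1)))) (fun _ ↦ ⊥)
    (fun i hi _ ↦ map_x_yFamily_le_of_le_ker y t _ x ν (fun i hi hit ↦ hmid i hi (by omega))
      le_rfl hi)
    (fun i _ _ ↦ map_yFamily_le y t _ i)
    (by simp [yFamily_of_gt y t _ (j := m + 2) (by omega)]) (by simp)
    (by simp [yFamily_of_gt y t _ (j := m + 2) (by omega)])
  simpa [← LinearMap.ker_eq_bot] using hV.1 (t+1) hi (by omega)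

theorem eq_bot_of_stable_top (h : HasNoInvariantSubspace m x y α β)
    (hmid : ∀ i, 1 ≤ i → i ≤ m → ∀ u : Fin (i+1) → ℂ,
      x i (y i u) = y (i+1) (x (i+1) u) - ν (i+1) • u)
    (W : Submodule ℂ (Fin (m+2) → ℂ))
    (hW : ∀ u ∈ W, x (m+1) (y (m+1) u) ∈ W) (L : Fin (m+2) → Submodule ℂ ℂ)
    (hα : ∀ j : Fin (m+2), W.map (α j.castSucc) ≤ L j)
    (hβ : ∀ j : Fin (m+2), (L j).map (β j.castSucc) ≤ W)
    (hker : W ≤ LinearMap.ker (α (Fin.last (m+2)))) :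
    W = ⊥ ∧ ∀ j, L j = ⊥ := by
  have hV := h (yFamily y (m+1) W) L
    (fun i hi him ↦ map_x_yFamily_le y (m+1) W x ν (fun i hi hit ↦ hmid i hi (by omega))
      (fun _ ↦ hW) hi him)
    (fun i _ _ ↦ map_yFamily_le y (m+1) W i)
    (by simpa using hα) (by simpa using hβ) (by simpa using hker)
  simpa using And.imp_left (fun hV ↦ hV (m+2) (by omega) le_rfl) hV

theorem injective_pi (h : HasNoInvariantSubspace m x y α β)
    (hmid : ∀ i, 1 ≤ i → i ≤ m → ∀ u : Fin (i+1) → ℂ,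
      x i (y i u) = y (i+1) (x (i+1) u) - ν (i+1) • u)
    (htop : ∀ u, x (m+1) (y (m+1) u) =
      LinearMap.lsum ℂ (fun _ ↦ ℂ) ℂ β (LinearMap.pi α u) - ν (m+2) • u) :
    Function.Injective (LinearMap.pi α) := by
  rw [← LinearMap.ker_eq_bot]
  refine (h.eq_bot_of_stable_top hmid _ ?_ (fun _ ↦ ⊥) ?_ (by simp) ?_).1
  · intro u hu
    rw [htop, LinearMap.mem_ker.mp hu, map_zero, zero_sub]
    exact neg_mem (Submodule.smul_mem _ _ hu)
  · rintro j _ ⟨u, hu, rfl⟩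
    simpa using congrFun hu j.castSucc
  · intro u hu
    exact congrFun hu (Fin.last _)

theorem not_map_coordSubspace_le (h : HasNoInvariantSubspace m x y α β)
    (hmid : ∀ i, 1 ≤ i → i ≤ m → ∀ u : Fin (i+1) → ℂ,
      x i (y i u) = y (i+1) (x (i+1) u) - ν (i+1) • u)
    (htop : ∀ u, x (m+1) (y (m+1) u) =
      LinearMap.lsum ℂ (fun _ ↦ ℂ) ℂ β (LinearMap.pi α u) - ν (m+2) • u)
    {S : Finset (Fin (m+2))} (hS : S.Nonempty) :
    ¬ (coordSubspace (m+3) (S.image Fin.castSucc)).map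
        ((LinearMap.pi α).comp (LinearMap.lsum ℂ (fun _ ↦ ℂ) ℂ β)) ≤
      coordSubspace (m+3) (S.image Fin.castSucc) := by
  intro hC
  set C := coordSubspace (m+3) (S.image Fin.castSucc)
  have hφψ (c : Fin (m+3) → ℂ) (hc : c ∈ C) :
      LinearMap.pi α (LinearMap.lsum ℂ (fun _ ↦ ℂ) ℂ β c) ∈ C :=
    hC ⟨c, hc, rfl⟩
  obtain ⟨j₀, hj₀⟩ := hS
  have hL := (h.eq_bot_of_stable_top hmid (C.map (LinearMap.lsum ℂ (fun _ ↦ ℂ) ℂ β)) ?_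
    (fun j ↦ if j ∈ S then ⊤ else ⊥) ?_ ?_ ?_).2 j₀
  · simp [hj₀] at hL
  · rintro _ ⟨c, hc, rfl⟩
    rw [htop]
    exact sub_mem ⟨_, hφψ c hc, rfl⟩ (Submodule.smul_mem _ _ ⟨c, hc, rfl⟩)
  · intro j
    split_ifs with hj
    · exact le_top
    · rintro _ ⟨_, ⟨c, hc, rfl⟩, rfl⟩
      simpa [hj] using mem_coordSubspace_iff.mp (hφψ c hc) j.castSucc
  · intro j
    split_ifs with hj
    · rintro _ ⟨c, -, rfl⟩
      refine ⟨Pi.single j.castSucc c, mem_coordSubspace_iff.mpr fun i hi ↦ ?_,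
        LinearMap.lsum_piSingle ..⟩
      rw [Pi.single_apply, if_neg]
      rintro rfl
      exact hi (Finset.mem_image_of_mem _ hj)
    · simp
  · rintro _ ⟨c, hc, rfl⟩
    simpa using mem_coordSubspace_iff.mp (hφψ c hc) (Fin.last _)

end HasNoInvariantSubspace

theorem eq_bot_of_map_le_of_injective {K : Type*} [CommRing K]
    {x : ∀ i : ℕ, (Fin i → K) →ₗ[K] (Fin (i+1) → K)} {V : ∀ i : ℕ, Submodule K (Fin i → K)} {n : ℕ}
    (hx : ∀ i, 1 ≤ i → i < n → Function.Injective (x i))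
    (hV : ∀ i, 1 ≤ i → i < n → (V i).map (x i) ≤ V (i+1)) (htop : V n = ⊥)
    {i : ℕ} (hi : 1 ≤ i) (hin : i ≤ n) : V i = ⊥ := by
  induction hin using Nat.decreasingInduction with
  | self => exact htop
  | of_succ i hin ih =>
    have hVi := Submodule.map_le_iff_le_comap.mp (hV i hi hin)
    rwa [ih (by omega), Submodule.comap_bot, LinearMap.ker_eq_bot.mpr (hx i hi hin),
      le_bot_iff] at hVi

theorem hasNoInvariantSubspace_of_injective {m : ℕ}
    {x : ∀ i : ℕ, (Fin i → ℂ) →ₗ[ℂ] (Fin (i+1) → ℂ)}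
    {y : ∀ i : ℕ, (Fin (i+1) → ℂ) →ₗ[ℂ] (Fin i → ℂ)}
    {α : Fin (m+3) → ((Fin (m+2) → ℂ) →ₗ[ℂ] ℂ)} {β : Fin (m+3) → (ℂ →ₗ[ℂ] (Fin (m+2) → ℂ))}
    (hx : ∀ i, 1 ≤ i → i ≤ m+1 → Function.Injective (x i))
    (hφ : Function.Injective (LinearMap.pi α))
    (hS : ∀ S : Finset (Fin (m+2)), S.Nonempty →
      ¬ (coordSubspace (m+3) (S.image Fin.castSucc)).map
          ((LinearMap.pi α).comp (LinearMap.lsum ℂ (fun _ ↦ ℂ) ℂ β)) ≤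
        coordSubspace (m+3) (S.image Fin.castSucc)) :
    HasNoInvariantSubspace m x y α β := by
  classical
  intro V L hVx _ hVα hVβ hVker
  have hL (j : Fin (m+2)) : L j = ⊥ := by
    by_contra hj
    exact hS {j | L j ≠ ⊥} ⟨j, by simpa using hj⟩
      (map_pi_comp_lsum_coordSubspace_le hVα hVβ hVker (by simp))
  have hVtop : V (m+2) = ⊥ := by
    rw [eq_bot_iff, ← LinearMap.ker_eq_bot.mpr hφ]
    intro v hv
    funext j
    induction j using Fin.lastCases with
    | last => exact hVker hv
    | cast j => simpa [hL] using hVα j ⟨v, hv, rfl⟩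
  exact ⟨fun i hi him ↦ eq_bot_of_map_le_of_injective (fun i hi hin ↦ hx i hi (by omega))
    (fun i hi hin ↦ hVx i hi (by omega)) hVtop hi him, hL⟩

/-- Here `n = m + 3`, `ℂ^i = Fin i → ℂ`, and `α_1, …, α_n`, `β_1, …, β_n` are indexed by
`Fin (m+3)` starting at `0`, so `α_n = α (Fin.last _)`; `φ = LinearMap.pi α` and
`ψ = ∑ β_j ∘ proj_j`. -/
theorem stmt3_general (m : ℕ)
    (x : ∀ i : ℕ, (Fin i → ℂ) →ₗ[ℂ] (Fin (i+1) → ℂ))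
    (y : ∀ i : ℕ, (Fin (i+1) → ℂ) →ₗ[ℂ] (Fin i → ℂ))
    (α : Fin (m+3) → ((Fin (m+2) → ℂ) →ₗ[ℂ] ℂ))
    (β : Fin (m+3) → (ℂ →ₗ[ℂ] (Fin (m+2) → ℂ)))
    (ν : ℕ → ℂ)
    (hrel2 : ∀ i, 1 ≤ i → i ≤ m →
      (y (i+1)).comp (x (i+1)) = (x i).comp (y i) + ν (i+1) • LinearMap.id)
    (hrel3 : (∑ j : Fin (m+3), (β j).comp (LinearMap.proj j)).comp (LinearMap.pi α) =
      (x (m+1)).comp (y (m+1)) + ν (m+2) • LinearMap.id) :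
    ((∀ (V : ∀ i : ℕ, Submodule ℂ (Fin i → ℂ)) (L : Fin (m+2) → Submodule ℂ ℂ),
        (∀ i, 1 ≤ i → i ≤ m+1 → (V i).map (x i) ≤ V (i+1)) →
        (∀ i, 1 ≤ i → i ≤ m+1 → (V (i+1)).map (y i) ≤ V i) →
        (∀ j : Fin (m+2), (V (m+2)).map (α j.castSucc) ≤ L j) →
        (∀ j : Fin (m+2), (L j).map (β j.castSucc) ≤ V (m+2)) →
        V (m+2) ≤ LinearMap.ker (α (Fin.last (m+2))) →
        ((∀ i, 1 ≤ i → i ≤ m+2 → V i = ⊥) ∧ ∀ j : Fin (m+2), L j = ⊥)) ↔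
      ((∀ i, 1 ≤ i → i ≤ m+1 → Function.Injective (x i)) ∧
        Function.Injective (LinearMap.pi α) ∧
        ∀ S : Finset (Fin (m+2)), S.Nonempty →
          ¬ ((coordSubspace (m+3) (S.image Fin.castSucc)).map
                ((LinearMap.pi α).comp (∑ j : Fin (m+3), (β j).comp (LinearMap.proj j))) ≤
              coordSubspace (m+3) (S.image Fin.castSucc)))) := by
  have hmid (i : ℕ) (hi : 1 ≤ i) (him : i ≤ m) (u : Fin (i+1) → ℂ) :
      x i (y i u) = y (i+1) (x (i+1) u) - ν (i+1) • u :=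
    eq_sub_of_add_eq (LinearMap.congr_fun (hrel2 i hi him) u).symm
  have htop (u : Fin (m+2) → ℂ) : x (m+1) (y (m+1) u) =
      LinearMap.lsum ℂ (fun _ ↦ ℂ) ℂ β (LinearMap.pi α u) - ν (m+2) • u :=
    eq_sub_of_add_eq (LinearMap.congr_fun hrel3 u).symm
  constructor
  · intro h
    exact ⟨fun i hi him ↦ HasNoInvariantSubspace.injective_x h hmid hi him,
      HasNoInvariantSubspace.injective_pi h hmid htop,
      fun S hS ↦ HasNoInvariantSubspace.not_map_coordSubspace_le h hmid htop hS⟩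
  · rintro ⟨hx, hφ, hS⟩
    exact hasNoInvariantSubspace_of_injective hx hφ hS

/-- (Here `n = m + 3 ≥ 3`; spaces are `ℂ^i = Fin i → ℂ`, stem maps
`x_i : ℂ^i → ℂ^{i+1}`, `y_i : ℂ^{i+1} → ℂ^i` for `1 ≤ i ≤ n−2 = m+1`; functionals
`α_1,…,α_n` on `ℂ^{n−1}` and maps `β_1,…,β_n : ℂ → ℂ^{n−1}` are 0-indexed by `Fin (m+3)`,
with `α_n = α (Fin.last _)`; `φ = LinearMap.pi α`, `ψ = ∑ β_j ∘ proj_j`.)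
Under the central moment-map relations, the following are equivalent:
(1) any graded subspace `(V_i, L_j)` invariant under all the maps and contained in
`ker α_n` at the top stem vertex is zero;
(2) all `x_i` and `φ` are injective, and `φ∘ψ` maps no nonzero coordinate subspace
`ℂ^S ⊆ ℂ^{n−1} ⊆ ℂⁿ` into itself. -/
theorem stmt3 (m : ℕ)
    (x : ∀ i : ℕ, (Fin i → ℂ) →ₗ[ℂ] (Fin (i+1) → ℂ))
    (y : ∀ i : ℕ, (Fin (i+1) → ℂ) →ₗ[ℂ] (Fin i → ℂ))
    (α : Fin (m+3) → ((Fin (m+2) → ℂ) →ₗ[ℂ] ℂ))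
    (β : Fin (m+3) → (ℂ →ₗ[ℂ] (Fin (m+2) → ℂ)))
    (ν : ℕ → ℂ)
    (hrel1 : (y 1).comp (x 1) = ν 1 • LinearMap.id)
    (hrel2 : ∀ i, 1 ≤ i → i ≤ m →
      (y (i+1)).comp (x (i+1)) = (x i).comp (y i) + ν (i+1) • LinearMap.id)
    (hrel3 : (∑ j : Fin (m+3), (β j).comp (LinearMap.proj j)).comp (LinearMap.pi α) =
      (x (m+1)).comp (y (m+1)) + ν (m+2) • LinearMap.id) :
    ((∀ (V : ∀ i : ℕ, Submodule ℂ (Fin i → ℂ)) (L : Fin (m+2) → Submodule ℂ ℂ),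
        (∀ i, 1 ≤ i → i ≤ m+1 → (V i).map (x i) ≤ V (i+1)) →
        (∀ i, 1 ≤ i → i ≤ m+1 → (V (i+1)).map (y i) ≤ V i) →
        (∀ j : Fin (m+2), (V (m+2)).map (α j.castSucc) ≤ L j) →
        (∀ j : Fin (m+2), (L j).map (β j.castSucc) ≤ V (m+2)) →
        V (m+2) ≤ LinearMap.ker (α (Fin.last (m+2))) →
        ((∀ i, 1 ≤ i → i ≤ m+2 → V i = ⊥) ∧ ∀ j : Fin (m+2), L j = ⊥)) ↔
      ((∀ i, 1 ≤ i → i ≤ m+1 → Function.Injective (x i)) ∧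
        Function.Injective (LinearMap.pi α) ∧
        ∀ S : Finset (Fin (m+2)), S.Nonempty →
          ¬ ((coordSubspace (m+3) (S.image Fin.castSucc)).map
                ((LinearMap.pi α).comp (∑ j : Fin (m+3), (β j).comp (LinearMap.proj j))) ≤
              coordSubspace (m+3) (S.image Fin.castSucc)))) :=
  stmt3_general m x y α β ν hrel2 hrel3
end

section
/- Let n ≥ 2, let λ_1,…,λ_n ∈ ℂ be pairwise distinct, and let δ ∈ ℂⁿ satisfy the genericity condition: for every nonempty proper subset S ⊊ {1,…,n} and every subset J ⊆ {1,…,n} with |J| = |S|, one has ∑_{i∈S} δ_i ≠ ∑_{j∈J} λ_j. Then no n×n complex matrix x whose characteristic polynomial is ∏_{i=1}^n (X − λ_i) and whose diagonal entries are x_{ii} = δ_i preserves a nonzero coordinate subspace ℂ^S with S ⊆ {1,…,n−1}; i.e., for every nonempty S ⊆ {1,…,n−1} there is v ∈ ℂ^S with x·v ∉ ℂ^S. -/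
open Polynomial

theorem Multiset.exists_le_map_eq_of_le_map {α β : Type*} {f : α → β} {s : Multiset α}
    {t : Multiset β} (h : t ≤ s.map f) : ∃ u ≤ s, u.map f = t := by
  classical
  induction s using Multiset.induction_on generalizing t with
  | empty => exact ⟨0, le_rfl, (Multiset.le_zero.mp (by simpa using h)).symm⟩
  | cons a s ih =>
    rw [Multiset.map_cons] at h
    by_cases ha : f a ∈ t
    · obtain ⟨u, hus, hu⟩ := ih (Multiset.erase_le_iff_le_cons.mpr h)
      refine ⟨a ::ₘ u, Multiset.cons_le_cons a hus, ?_⟩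
      rw [Multiset.map_cons, hu, Multiset.cons_erase ha]
    · obtain ⟨u, hus, hu⟩ := ih ((Multiset.le_cons_of_notMem ha).mp h)
      exact ⟨u, hus.trans (Multiset.le_cons_self s a), hu⟩

theorem Polynomial.exists_finset_roots_eq_of_dvd_prod_X_sub_C {K ι : Type*} [Field K]
    [Fintype ι] (lam : ι → K) {p : K[X]} (hp : p ∣ ∏ i, (X - C (lam i))) :
    ∃ J : Finset ι, p.roots = J.val.map lam := by
  have hroots : p.roots ≤ Finset.univ.val.map lam := by
    have hroots_prod := roots_multiset_prod_X_sub_C (Finset.univ.val.map lam)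
    rw [Multiset.map_map] at hroots_prod
    exact hroots_prod ▸ Polynomial.roots.le_of_dvd
      (monic_prod_of_monic _ _ fun i _ => monic_X_sub_C (lam i)).ne_zero hp
  obtain ⟨u, hu, hroots_eq⟩ := Multiset.exists_le_map_eq_of_le_map hroots
  exact ⟨⟨u, Multiset.nodup_of_le hu Finset.univ.nodup⟩, hroots_eq.symm⟩

theorem Matrix.exists_trace_eq_sum_of_charpoly_dvd_prod_X_sub_C {K ι κ : Type*} [Field K]
    [IsAlgClosed K] [Fintype ι] [Fintype κ] [DecidableEq κ] (lam : ι → K) (A : Matrix κ κ K)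
    (hA : A.charpoly ∣ ∏ i, (X - C (lam i))) :
    ∃ J : Finset ι, J.card = Fintype.card κ ∧ A.trace = ∑ j ∈ J, lam j := by
  obtain ⟨J, hJ⟩ := Polynomial.exists_finset_roots_eq_of_dvd_prod_X_sub_C lam hA
  refine ⟨J, ?_, ?_⟩
  · rw [← A.charpoly_natDegree_eq_dim, ← IsAlgClosed.card_roots_eq_natDegree, hJ,
      Multiset.card_map, Finset.card_val]
  · rw [A.trace_eq_sum_roots_charpoly, hJ, Finset.sum_eq_multiset_sum]

theorem Matrix.charpoly_submatrix_dvd_charpoly {R ι : Type*} [CommRing R] [Fintype ι]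
    [DecidableEq ι] (M : Matrix ι ι R) (S : Finset ι) (h : ∀ i ∉ S, ∀ j ∈ S, M i j = 0) :
    (M.submatrix ((↑) : S → ι) (↑)).charpoly ∣ M.charpoly := by
  set e := (Equiv.sumCompl (· ∈ S)).symm
  set N := reindex e e M
  have hN : N = fromBlocks (M.submatrix ((↑) : S → ι) (↑)) N.toBlocks₁₂ 0 N.toBlocks₂₂ := by
    conv_lhs => rw [← N.fromBlocks_toBlocks]
    congr 1
    ext i j
    exact h i i.2 j j.2
  rw [← charpoly_reindex e M]
  exact ⟨_, hN ▸ charpoly_fromBlocks_zero₂₁ _ _ _⟩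

theorem mem_coordSubspace {n : ℕ} {S : Finset (Fin n)} {v : Fin n → ℂ} :
    v ∈ coordSubspace n S ↔ ∀ j ∉ S, v j = 0 := by
  rw [coordSubspace, ← funext (Pi.basisFun_apply ℂ (Fin n)), Module.Basis.mem_span_image]
  simp only [Set.subset_def, Finset.mem_coe, Finsupp.mem_support_iff, Pi.basisFun_repr]
  exact forall_congr' fun j => not_imp_comm

theorem Matrix.apply_eq_zero_of_mulVec_mem_coordSubspace {n : ℕ} {x : Matrix (Fin n) (Fin n) ℂ}
    {S : Finset (Fin n)} (hx : ∀ v ∈ coordSubspace n S, x.mulVec v ∈ coordSubspace n S) :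
    ∀ i ∉ S, ∀ j ∈ S, x i j = 0 := by
  intro i hi j hj
  have hsingle : (Pi.single j 1 : Fin n → ℂ) ∈ coordSubspace n S :=
    Submodule.subset_span ⟨j, hj, rfl⟩
  simpa [Matrix.mulVec_single] using mem_coordSubspace.mp (hx _ hsingle) i hi

theorem stmt9_general (n : ℕ) (lam : Fin n → ℂ)
    (δ : Fin n → ℂ)
    (hgen : ∀ S : Finset (Fin n), S.Nonempty → S ≠ Finset.univ →
      ∀ J : Finset (Fin n), J.card = S.card → ∑ i ∈ S, δ i ≠ ∑ j ∈ J, lam j)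
    (x : Matrix (Fin n) (Fin n) ℂ)
    (hchar : x.charpoly = ∏ i : Fin n, (Polynomial.X - Polynomial.C (lam i)))
    (hdiag : ∀ i, x i i = δ i) :
    ∀ S : Finset (Fin n), S.Nonempty → (∀ i ∈ S, (i : ℕ) < n - 1) →
      ∃ v ∈ coordSubspace n S, x.mulVec v ∉ coordSubspace n S := by
  intro S hS hSlt
  have hS_ne_univ : S ≠ Finset.univ := by
    obtain ⟨i, hi⟩ := hS
    have hi_lt := hSlt i hi
    intro hSu
    simpa using hSlt ⟨n - 1, by omega⟩ (hSu ▸ Finset.mem_univ _)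
  by_contra! hx
  have hdvd := hchar ▸ x.charpoly_submatrix_dvd_charpoly S
    (Matrix.apply_eq_zero_of_mulVec_mem_coordSubspace hx)
  obtain ⟨J, hJcard, htrace⟩ := Matrix.exists_trace_eq_sum_of_charpoly_dvd_prod_X_sub_C lam _ hdvd
  refine hgen S hS hS_ne_univ J (by simpa using hJcard) ?_
  rw [← htrace, Matrix.trace, ← Finset.sum_coe_sort S]
  exact Finset.sum_congr rfl fun i _ => (hdiag i).symm

/-- Let `λ_1,…,λ_n` be pairwise distinct and let `δ ∈ ℂⁿ` be generic:
for every nonempty proper `S ⊊ {1,…,n}` and every `J` with `|J| = |S|`,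
`∑_{i∈S} δ_i ≠ ∑_{j∈J} λ_j`.  Then no matrix `x` with characteristic polynomial
`∏ (X − λ_i)` and diagonal `δ` preserves a nonzero coordinate subspace `ℂ^S` with
`S ⊆ {1,…,n−1}` (the first `n−1` coordinates). -/
theorem stmt9 (n : ℕ) (hn : 2 ≤ n) (lam : Fin n → ℂ) (hlam : Function.Injective lam)
    (δ : Fin n → ℂ)
    (hgen : ∀ S : Finset (Fin n), S.Nonempty → S ≠ Finset.univ →
      ∀ J : Finset (Fin n), J.card = S.card → ∑ i ∈ S, δ i ≠ ∑ j ∈ J, lam j)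
    (x : Matrix (Fin n) (Fin n) ℂ)
    (hchar : x.charpoly = ∏ i : Fin n, (Polynomial.X - Polynomial.C (lam i)))
    (hdiag : ∀ i, x i i = δ i) :
    ∀ S : Finset (Fin n), S.Nonempty → (∀ i ∈ S, (i : ℕ) < n - 1) →
      ∃ v ∈ coordSubspace n S, x.mulVec v ∉ coordSubspace n S :=
  stmt9_general n lam δ hgen x hchar hdiag
end

section
/- Let n ≥ 3. For integer vectors α = (α_{s_1},…,α_{s_{n−1}}; α_{b_1},…,α_{b_n}) and β indexed by the vertices of the abundant bouquet quiver Q_n^+, define the Euler form (α, β) := 2·∑_{i=1}^{n−1} α_{s_i} β_{s_i} + 2·∑_{j=1}^{n} α_{b_j} β_{b_j} − ∑_{i=1}^{n−2} (α_{s_i} β_{s_{i+1}} + β_{s_i} α_{s_{i+1}}) − ∑_{j=1}^{n} (α_{s_{n−1}} β_{b_j} + β_{s_{n−1}} α_{b_j}). Let v̂ be the dimension vector with v̂_{s_i} = i for 1 ≤ i ≤ n−1 and v̂_{b_j} = 1 for 1 ≤ j ≤ n. Then for every integer vector w with 0 ≤ w ≤ v̂ componentwise, w ≠ 0 and w ≠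 v̂, one has (w, v̂ − w) ≤ −2. -/
open Finset

/-- Telescoping sum over `Icc 1 m`. -/
lemma bqTelId (a : ℕ → ℤ) : ∀ m : ℕ,
    ∑ i ∈ Icc 1 m, (a (i+1) - a i) = a (m+1) - a 1 := by
  intro m
  induction m with
  | zero => simp
  | succ k ih =>
    rw [Finset.sum_Icc_succ_top (by omega : 1 ≤ k+1)]
    linear_combination ih

lemma bqIntLeSq (x : ℤ) : x ≤ x^2 := by
  rcases le_or_gt x 0 with h | h
  · nlinarith
  · nlinarith

lemma bqEvenSqSub (x : ℤ) : Even (x^2 - x) := by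
  have := Int.even_mul_succ_self (x - 1)
  convert this using 1; ring

lemma bqEvenSum {ι : Type*} {s : Finset ι} (f : ι → ℤ) (h : ∀ i ∈ s, Even (f i)) :
    Even (∑ i ∈ s, f i) :=
  Finset.sum_induction f Even (fun _ _ => Even.add) Even.zero h

/-- Algebraic identity for the stem part of the Euler form. -/
lemma bqStemId (a : ℕ → ℤ) : ∀ m : ℕ,
    2 * ∑ i ∈ Icc 1 (m+1), a i * ((i:ℤ) - a i)
      - ∑ i ∈ Icc 1 m, (a i * ((↑(i+1):ℤ) - a (i+1)) + ((i:ℤ) - a i) * a (i+1))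
    = ((m:ℤ)+2) * a (m+1) - a 1^2 - (∑ i ∈ Icc 1 m, (a (i+1) - a i)^2) - a (m+1)^2 := by
  intro m
  induction m with
  | zero => simp; ring
  | succ k ih =>
    rw [Finset.sum_Icc_succ_top (by omega : 1 ≤ k+1),
        Finset.sum_Icc_succ_top (by omega : 1 ≤ k+1),
        Finset.sum_Icc_succ_top (by omega : 1 ≤ k+1+1)]
    push_cast at ih ⊢
    linear_combination ih

/-- Algebraic identity for the bouquet part of the Euler form. -/
lemma bqBouquetId (c d : ℤ) (wb : ℕ → ℤ) : ∀ N : ℕ,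
    ∑ j ∈ Icc 1 N, (c * (1 - wb j) + d * wb j)
      = (N:ℤ) * c + (d - c) * ∑ j ∈ Icc 1 N, wb j := by
  intro N
  induction N with
  | zero => simp
  | succ k ih =>
    rw [Finset.sum_Icc_succ_top (by omega : 1 ≤ k+1),
        Finset.sum_Icc_succ_top (by omega : 1 ≤ k+1)]
    push_cast at ih ⊢
    linear_combination ih

/-- The combinatorial inequality. -/
lemma bqFinalIneq (m : ℕ) (ws : ℕ → ℤ) (K : ℤ)
    (hK0 : 0 ≤ K) (hKn : K ≤ (m:ℤ)+3)
    (h0 : K = 0 → ∃ i ∈ Icc 1 (m+2), ws i ≠ 0)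
    (hv : K = (m:ℤ)+3 → ∃ i ∈ Icc 1 (m+2), ws i ≠ (i:ℤ)) :
    2 ≤ ws 1^2 + (∑ i ∈ Icc 1 (m+1), (ws (i+1) - ws i)^2)
        + (K - ws (m+2))^2 + K * (((m:ℤ)+2) - K) := by
  have hD : ∑ i ∈ Icc 1 (m+1), (ws (i+1) - ws i) = ws (m+2) - ws 1 := bqTelId ws (m+1)
  have hDT : ∑ i ∈ Icc 1 (m+1), (ws (i+1) - ws i)
      ≤ ∑ i ∈ Icc 1 (m+1), (ws (i+1) - ws i)^2 :=
    Finset.sum_le_sum (fun i _ => bqIntLeSq _)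
  have hTD : ∑ i ∈ Icc 1 (m+1), ((ws (i+1) - ws i)^2 - (ws (i+1) - ws i))
      = (∑ i ∈ Icc 1 (m+1), (ws (i+1) - ws i)^2)
        - ∑ i ∈ Icc 1 (m+1), (ws (i+1) - ws i) := Finset.sum_sub_distrib _ _
  set T : ℤ := ∑ i ∈ Icc 1 (m+1), (ws (i+1) - ws i)^2 with hTdef
  have hTnn : 0 ≤ T := Finset.sum_nonneg (fun i _ => sq_nonneg _)
  have hEK : K ≤ ws 1^2 + T + (K - ws (m+2))^2 := by
    have h1 := bqIntLeSq (ws 1)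
    have h3 := bqIntLeSq (K - ws (m+2))
    linarith
  have hpar : Even (ws 1^2 + T + (K - ws (m+2))^2 - K) := by
    have e1 := bqEvenSqSub (ws 1)
    have e3 := bqEvenSqSub (K - ws (m+2))
    have e2 : Even (T - (ws (m+2) - ws 1)) := by
      rw [← hD, ← hTD]
      exact bqEvenSum _ (fun i _ => bqEvenSqSub _)
    have : ws 1^2 + T + (K - ws (m+2))^2 - K
        = (ws 1^2 - ws 1) + (T - (ws (m+2) - ws 1)) + ((K - ws (m+2))^2 - (K - ws (m+2))) := by
      ring
    rw [this]
    exact (e1.add e2).add e3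
  have hcase : K = 0 ∨ (1 ≤ K ∧ K ≤ (m:ℤ)+2) ∨ K = (m:ℤ)+3 := by omega
  rcases hcase with hK | ⟨hK1, hK2⟩ | hK
  · -- K = 0
    obtain ⟨i0, hi0, hne⟩ := h0 hK
    have hE1 : 1 ≤ ws 1^2 + T + (K - ws (m+2))^2 := by
      by_contra hcon
      push_neg at hcon
      have h1 : ws 1 ^ 2 = 0 := by nlinarith [sq_nonneg (ws 1), sq_nonneg (K - ws (m+2))]
      have h2 : T = 0 := by nlinarith [sq_nonneg (ws 1), sq_nonneg (K - ws (m+2))]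
      have hw1 : ws 1 = 0 := by nlinarith
      have hstep : ∀ i ∈ Icc 1 (m+1), ws (i+1) = ws i := by
        intro i hi
        have := (Finset.sum_eq_zero_iff_of_nonneg
          (fun j _ => sq_nonneg (ws (j+1) - ws j))).1 h2 i hi
        nlinarith [this]
      have hzero : ∀ i, 1 ≤ i → i ≤ m+2 → ws i = 0 := by
        intro i
        induction i with
        | zero => omega
        | succ k ihk =>
          intro h1' h2'
          rcases Nat.lt_or_ge 1 (k+1) with hk | hk
          · have hk1 : 1 ≤ k := by omega
            rw [hstep k (Finset.mem_Icc.mpr ⟨hk1, by omega⟩)]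
            exact ihk hk1 (by omega)
          · have : k = 0 := by omega
            subst this; exact hw1
      have hi0' := Finset.mem_Icc.mp hi0
      exact hne (hzero i0 hi0'.1 hi0'.2)
    have hE2 : 2 ≤ ws 1^2 + T + (K - ws (m+2))^2 := by
      obtain ⟨t, ht⟩ := hpar
      omega
    have : K * (((m:ℤ)+2) - K) = 0 := by rw [hK]; ring
    linarith
  · -- middle case
    have hprod : 0 ≤ (K - 1) * (((m:ℤ)+2) - K) := mul_nonneg (by linarith) (by linarith)
    nlinarith [hEK]
  · -- K = m+3
    obtain ⟨i0, hi0, hne⟩ := hv hK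
    have hEne : ws 1^2 + T + (K - ws (m+2))^2 ≠ K := by
      intro hEq
      have h1 := bqIntLeSq (ws 1)
      have h3 := bqIntLeSq (K - ws (m+2))
      have hx1 : ws 1 ^ 2 = ws 1 := by linarith
      have hx2 : T = ws (m+2) - ws 1 := by linarith
      have hx3 : (K - ws (m+2))^2 = K - ws (m+2) := by linarith
      have hsteps : ∀ i ∈ Icc 1 (m+1), (ws (i+1) - ws i)^2 = ws (i+1) - ws i := by
        intro i hi
        have hz : ∑ i ∈ Icc 1 (m+1), ((ws (i+1) - ws i)^2 - (ws (i+1) - ws i)) = 0 := by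
          rw [hTD, hD]; linarith
        have := (Finset.sum_eq_zero_iff_of_nonneg
          (fun j _ => by have := bqIntLeSq (ws (j+1) - ws j); linarith)).1 hz i hi
        linarith
      have hstep_le : ∀ i ∈ Icc 1 (m+1), ws (i+1) - ws i ≤ 1 := by
        intro i hi
        have h := hsteps i hi
        nlinarith
      have hDle : ws (m+2) - ws 1 ≤ (m:ℤ)+1 := by
        rw [← hD]
        calc ∑ i ∈ Icc 1 (m+1), (ws (i+1) - ws i) ≤ ∑ _i ∈ Icc 1 (m+1), (1:ℤ) :=
              Finset.sum_le_sum hstep_le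
          _ = (m:ℤ)+1 := by simp
      have hw1le : ws 1 ≤ 1 := by nlinarith [hx1]
      have hKale : K - ws (m+2) ≤ 1 := by nlinarith [hx3]
      have hw1 : ws 1 = 1 := by omega
      have hsum1 : ∑ i ∈ Icc 1 (m+1), ((1:ℤ) - (ws (i+1) - ws i)) = 0 := by
        rw [Finset.sum_sub_distrib, hD]
        simp
        omega
      have hstep1 : ∀ i ∈ Icc 1 (m+1), ws (i+1) = ws i + 1 := by
        intro i hi
        have := (Finset.sum_eq_zero_iff_of_nonneg
          (fun j hj => by have := hstep_le j hj; linarith)).1 hsum1 i hi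
        linarith
      have hall : ∀ i, 1 ≤ i → i ≤ m+2 → ws i = (i:ℤ) := by
        intro i
        induction i with
        | zero => omega
        | succ k ihk =>
          intro h1' h2'
          rcases Nat.lt_or_ge 1 (k+1) with hk | hk
          · have hk1 : 1 ≤ k := by omega
            rw [hstep1 k (Finset.mem_Icc.mpr ⟨hk1, by omega⟩), ihk hk1 (by omega)]
            push_cast; ring
          · have : k = 0 := by omega
            subst this; simpa using hw1
      have hi0' := Finset.mem_Icc.mp hi0
      exact hne (hall i0 hi0'.1 hi0'.2)
    have hE2 : K + 2 ≤ ws 1^2 + T + (K - ws (m+2))^2 := by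
      obtain ⟨t, ht⟩ := hpar
      omega
    have : K * (((m:ℤ)+2) - K) = -((m:ℤ)+3) := by rw [hK]; ring
    linarith

/-- The symmetrized Ringel (Euler) form of the abundant bouquet quiver `Q_n^+`, for
vectors given by their stem components (`as`, `bs`, indexed by `1,…,n−1`) and bouquet
components (`ab`, `bb`, indexed by `1,…,n`):
`(α, β) = 2∑ α_{s_i} β_{s_i} + 2∑ α_{b_j} β_{b_j} − ∑_{i=1}^{n−2}(α_{s_i} β_{s_{i+1}} +
β_{s_i} α_{s_{i+1}}) − ∑_{j=1}^{n}(α_{s_{n−1}} β_{b_j} + β_{s_{n−1}} α_{b_j})`. -/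
def eulerFormQ (n : ℕ) (as ab bs bb : ℕ → ℤ) : ℤ :=
  2 * ∑ i ∈ Icc 1 (n-1), as i * bs i + 2 * ∑ j ∈ Icc 1 n, ab j * bb j
    - ∑ i ∈ Icc 1 (n-2), (as i * bs (i+1) + bs i * as (i+1))
    - ∑ j ∈ Icc 1 n, (as (n-1) * bb j + bs (n-1) * ab j)

/-- The key algebraic identity: the Euler pairing `(w, v̂ − w)` written as a negative
combination of squares. -/
lemma bqKeyId (m : ℕ) (ws wb : ℕ → ℤ) :
    eulerFormQ (m+3) ws wb (fun i => (i:ℤ) - ws i) (fun j => 1 - wb j)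
      = 2 * ∑ j ∈ Icc 1 (m+3), wb j * (1 - wb j)
        - (ws 1^2 + (∑ i ∈ Icc 1 (m+1), (ws (i+1) - ws i)^2)
           + ((∑ j ∈ Icc 1 (m+3), wb j) - ws (m+2))^2
           + (∑ j ∈ Icc 1 (m+3), wb j) * (((m:ℤ)+2) - ∑ j ∈ Icc 1 (m+3), wb j)) := by
  have h1 := bqStemId ws (m+1)
  have h2 := bqBouquetId (ws (m+2)) (((m:ℤ)+2) - ws (m+2)) wb (m+3)
  unfold eulerFormQ
  have e1 : m+3-1 = m+2 := rfl
  have e2 : m+3-2 = m+1 := rfl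
  simp only [e1, e2]
  push_cast at h1 h2 ⊢
  linear_combination h1 - h2

/-- Let `n ≥ 3` and let `v̂` be the dimension vector with
`v̂_{s_i} = i` and `v̂_{b_j} = 1`.  For every integer vector `w` with `0 ≤ w ≤ v̂`
componentwise, `w ≠ 0` and `w ≠ v̂`, one has `(w, v̂ − w) ≤ −2`. -/
theorem stmt10 (n : ℕ) (hn : 3 ≤ n) (ws wb : ℕ → ℤ)
    (hws : ∀ i ∈ Icc 1 (n-1), 0 ≤ ws i ∧ ws i ≤ (i : ℤ))
    (hwb : ∀ j ∈ Icc 1 n, 0 ≤ wb j ∧ wb j ≤ 1)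
    (hne0 : ¬ ((∀ i ∈ Icc 1 (n-1), ws i = 0) ∧ (∀ j ∈ Icc 1 n, wb j = 0)))
    (hnev : ¬ ((∀ i ∈ Icc 1 (n-1), ws i = (i : ℤ)) ∧ (∀ j ∈ Icc 1 n, wb j = 1))) :
    eulerFormQ n ws wb (fun i => (i : ℤ) - ws i) (fun j => 1 - wb j) ≤ -2 := by
  obtain ⟨m, rfl⟩ : ∃ m, n = m + 3 := ⟨n - 3, by omega⟩
  rw [bqKeyId m ws wb]
  have hwb' : ∀ j ∈ Icc 1 (m+3), 0 ≤ wb j ∧ wb j ≤ 1 := hwb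
  have hK0 : 0 ≤ ∑ j ∈ Icc 1 (m+3), wb j :=
    Finset.sum_nonneg (fun j hj => (hwb' j hj).1)
  have hKn : ∑ j ∈ Icc 1 (m+3), wb j ≤ (m:ℤ)+3 := by
    calc ∑ j ∈ Icc 1 (m+3), wb j ≤ ∑ _j ∈ Icc 1 (m+3), (1:ℤ) :=
          Finset.sum_le_sum (fun j hj => (hwb' j hj).2)
      _ = (m:ℤ)+3 := by simp
  have hB : ∑ j ∈ Icc 1 (m+3), wb j * (1 - wb j) ≤ 0 := by
    apply Finset.sum_nonpos
    intro j _
    have := bqIntLeSq (wb j)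
    nlinarith
  have h0 : (∑ j ∈ Icc 1 (m+3), wb j) = 0 → ∃ i ∈ Icc 1 (m+2), ws i ≠ 0 := by
    intro hK
    by_contra hcon
    push_neg at hcon
    apply hne0
    refine ⟨fun i hi => hcon i hi, fun j hj => ?_⟩
    exact (Finset.sum_eq_zero_iff_of_nonneg (fun j hj => (hwb' j hj).1)).1 hK j hj
  have hv : (∑ j ∈ Icc 1 (m+3), wb j) = (m:ℤ)+3 → ∃ i ∈ Icc 1 (m+2), ws i ≠ (i:ℤ) := by
    intro hK
    by_contra hcon
    push_neg at hcon
    apply hnev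
    refine ⟨fun i hi => hcon i hi, fun j hj => ?_⟩
    have hsum : ∑ j ∈ Icc 1 (m+3), ((1:ℤ) - wb j) = 0 := by
      rw [Finset.sum_sub_distrib]
      simp
      omega
    have := (Finset.sum_eq_zero_iff_of_nonneg
      (fun j hj => by linarith [(hwb' j hj).2])).1 hsum j hj
    linarith
  have hfin := bqFinalIneq m ws (∑ j ∈ Icc 1 (m+3), wb j) hK0 hKn h0 hv
  linarith
end
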